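/- Let Γ be a connected graph on n vertices without isolated vertices. Then the double domination number of the rooted product of Γ with the 4-cycle C_4 (rooted at any vertex) equals n·γ_×2(C_4) = 3n. -/

import Mathlib

open SimpleGraph

variable {V : Type*}

/-- `D` is a dominating set of `G`: every vertex is in `D` or adjacent to a vertex of `D`. -/
def IsDominating (G : SimpleGraph V) (D : Set V) : Prop :=
  ∀ u : V, u ∈ D ∨ ∃ d ∈ D, G.Adj u d

/-- `D` is a total dominating set of `G`: every vertex has a neighbor in `D`. -/
def IsTotalDominating (G : SimpleGraph V) (D : Set V) : Prop :=
  ∀ u : V, ∃ d ∈ D, G.Adj u d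

/-- `R` is a resolving set of `G`. -/
def IsResolving (G : SimpleGraph V) (R : Set V) : Prop :=
  ∀ u v : V, u ≠ v → ∃ r ∈ R, G.dist u r ≠ G.dist v r

/-- `D` is an independent set of `G`. -/
def IsIndependentSet (G : SimpleGraph V) (D : Set V) : Prop :=
  ∀ u ∈ D, ∀ v ∈ D, ¬ G.Adj u v

/-- the subgraph of `G` induced by `D` is connected. -/
def InducedConnected (G : SimpleGraph V) (D : Set V) : Prop :=
  (G.induce D).Connected

/-- closed neighborhood -/
def closedNbhd (G : SimpleGraph V) (u : V) : Set V :=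
  insert u (G.neighborSet u)

/-- `D` is a double dominating set of `G`: `|N[u] ∩ D| ≥ 2` for every vertex `u`. -/
def IsDoubleDominating (G : SimpleGraph V) (D : Set V) : Prop :=
  ∀ u : V, 2 ≤ (closedNbhd G u ∩ D).ncard

/-- `D` is a 2-dominating set of `G`: every vertex outside `D` has ≥ 2 neighbors in `D`. -/
def IsTwoDominating (G : SimpleGraph V) (D : Set V) : Prop :=
  ∀ u : V, u ∉ D → 2 ≤ (G.neighborSet u ∩ D).ncard

/-- minimum cardinality of a set of vertices satisfying `P`. -/
noncomputable def minCard (P : Set V → Prop) : ℕ :=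
  sInf {n : ℕ | ∃ D : Set V, P D ∧ D.ncard = n}

noncomputable def gamma (G : SimpleGraph V) : ℕ := minCard (IsDominating G)
noncomputable def gammaT (G : SimpleGraph V) : ℕ := minCard (IsTotalDominating G)
noncomputable def gammaC (G : SimpleGraph V) : ℕ :=
  minCard (fun D => IsDominating G D ∧ InducedConnected G D)
noncomputable def gammaI (G : SimpleGraph V) : ℕ :=
  minCard (fun D => IsDominating G D ∧ IsIndependentSet G D)
noncomputable def gammaX2 (G : SimpleGraph V) : ℕ := minCard (IsDoubleDominating G)
noncomputable def gamma2 (G : SimpleGraph V) : ℕ := minCard (IsTwoDominating G)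
noncomputable def mdim (G : SimpleGraph V) : ℕ := minCard (IsResolving G)
noncomputable def gammaR (G : SimpleGraph V) : ℕ :=
  minCard (fun D => IsDominating G D ∧ IsResolving G D)
noncomputable def gammaRI (G : SimpleGraph V) : ℕ :=
  minCard (fun D => IsDominating G D ∧ IsIndependentSet G D ∧ IsResolving G D)
noncomputable def gammaRT (G : SimpleGraph V) : ℕ :=
  minCard (fun D => IsTotalDominating G D ∧ IsResolving G D)
noncomputable def gammaRC (G : SimpleGraph V) : ℕ :=
  minCard (fun D => IsDominating G D ∧ InducedConnected G D ∧ IsResolving G D)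

/-- `u` and `v` are twins: `N(u) = N(v)` or `N[u] = N[v]`. -/
def AreTwins (G : SimpleGraph V) (u v : V) : Prop :=
  G.neighborSet u = G.neighborSet v ∨ closedNbhd G u = closedNbhd G v

/-- The rooted product `Γ ∘_v Ω`: a copy of `Ω` is attached at its root `v`
to every vertex of `Γ`. -/
def rootedProduct {α β : Type*} (Γ : SimpleGraph α) (Ω : SimpleGraph β) (v : β) :
    SimpleGraph (α × β) where
  Adj p q := (p.2 = v ∧ q.2 = v ∧ Γ.Adj p.1 q.1) ∨ (p.1 = q.1 ∧ Ω.Adj p.2 q.2)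
  symm := by
    refine ⟨fun p q h => ?_⟩
    rcases h with ⟨h1, h2, h3⟩ | ⟨h1, h2⟩
    · exact Or.inl ⟨h2, h1, h3.symm⟩
    · exact Or.inr ⟨h1.symm, h2.symm⟩
  loopless := by
    refine ⟨fun p h => ?_⟩
    rcases h with ⟨_, _, h⟩ | ⟨_, h⟩ <;> exact h.ne rfl

/-- Vertex type of the fractal cubic network `FCN l`. -/
def FCNVert : ℕ → Type
  | 0 => Fin 4
  | (l + 1) => Fin 4 × FCNVert l

/-- Auxiliary vertex `(01)^{l+1}` of `FCN l` (labels `00,01,11,10` ↦ `0,1,2,3`). -/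
def fcnAux : (l : ℕ) → FCNVert l
  | 0 => ((1 : Fin 4) : FCNVert 0)
  | (l + 1) => (((1 : Fin 4), fcnAux l) : FCNVert (l + 1))

/-- The designated root `10(01)^l` of `FCN l`. -/
def fcnRoot : (l : ℕ) → FCNVert l
  | 0 => ((3 : Fin 4) : FCNVert 0)
  | (l + 1) => (((3 : Fin 4), fcnAux l) : FCNVert (l + 1))

/-- The fractal cubic network: `FCN 0 = C₄` and
`FCN (l+1) = C₄ ∘_v FCN l`, rooted at the designated root of `FCN l`. -/
def FCN : (l : ℕ) → SimpleGraph (FCNVert l)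
  | 0 => cycleGraph 4
  | (l + 1) => rootedProduct (cycleGraph 4) (FCN l) (fcnRoot l)

/-!
A vertex `(a, x)` of `Γ ∘_v C₄` with `x ≠ v` sees only its own copy `{a} × C₄`, so a double
dominating set restricts on every copy to a set that doubly dominates the three non-root vertices
of `C₄`, and such a set has at least three elements. Conversely, the closed neighbourhood of the
root, taken in every copy, is a double dominating set with `3n` elements.
-/

open Set

lemma mem_closedNbhd_iff {G : SimpleGraph V} {u x : V} :
    x ∈ closedNbhd G u ↔ x = u ∨ G.Adj u x := by
  simp [closedNbhd]

lemma minCard_eq_of_forall_le {P : Set V → Prop} {D : Set V} (hD : P D)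
    (h : ∀ D', P D' → D.ncard ≤ D'.ncard) : minCard P = D.ncard := by
  refine le_antisymm (Nat.sInf_le ⟨D, hD, rfl⟩) (le_csInf ⟨_, D, hD, rfl⟩ ?_)
  rintro n ⟨D', hD', rfl⟩
  exact h D' hD'

lemma ncard_eq_sum_ncard_preimage_mk {α β : Type*} [Fintype α] [Finite β] (D : Set (α × β)) :
    D.ncard = ∑ a, (Prod.mk a ⁻¹' D).ncard := by
  let e : D ≃ Σ a, (Prod.mk a ⁻¹' D : Set β) :=
    { toFun := fun p => ⟨p.1.1, p.1.2, p.2⟩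
      invFun := fun q => ⟨(q.1, q.2.1), q.2.2⟩
      left_inv := fun _ => rfl
      right_inv := fun _ => rfl }
  simp only [← Nat.card_coe_set_eq, Nat.card_congr e, Nat.card_sigma]

section RootedProduct

variable {α β : Type*} (Γ : SimpleGraph α) {Ω : SimpleGraph β} (v : β)

lemma rootedProduct_adj_right {a : α} {w w' : β} :
    (rootedProduct Γ Ω v).Adj (a, w) (a, w') ↔ Ω.Adj w w' := by
  simp [rootedProduct]

lemma image_mk_closedNbhd_subset (a : α) (w : β) :
    Prod.mk a '' closedNbhd Ω w ⊆ closedNbhd (rootedProduct Γ Ω v) (a, w) := by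
  rintro _ ⟨w', hw', rfl⟩
  rcases mem_closedNbhd_iff.mp hw' with rfl | hadj
  · exact mem_insert _ _
  · exact mem_closedNbhd_iff.mpr (Or.inr ((rootedProduct_adj_right Γ v).mpr hadj))

lemma closedNbhd_rootedProduct_of_ne {w : β} (hw : w ≠ v) (a : α) :
    closedNbhd (rootedProduct Γ Ω v) (a, w) = Prod.mk a '' closedNbhd Ω w := by
  refine Subset.antisymm ?_ (image_mk_closedNbhd_subset Γ v a w)
  rintro ⟨b, w'⟩ h
  rcases mem_closedNbhd_iff.mp h with h | ⟨⟨hwv, -⟩ | ⟨rfl, hadj⟩⟩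
  · exact h ▸ mem_image_of_mem _ (mem_insert _ _)
  · exact absurd hwv hw
  · exact mem_image_of_mem _ (mem_closedNbhd_iff.mpr (Or.inr hadj))

lemma IsDoubleDominating.univ_prod [Finite α] [Finite β] {S : Set β}
    (hS : IsDoubleDominating Ω S) : IsDoubleDominating (rootedProduct Γ Ω v) (univ ×ˢ S) := by
  rintro ⟨a, w⟩
  calc 2 ≤ (closedNbhd Ω w ∩ S).ncard := hS w
    _ = (Prod.mk a '' (closedNbhd Ω w ∩ S)).ncard :=
      (ncard_image_of_injective _ (Prod.mk_right_injective a)).symm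
    _ ≤ _ := by
      refine ncard_le_ncard ?_ (toFinite _)
      rintro _ ⟨w', ⟨hN, hS⟩, rfl⟩
      exact ⟨image_mk_closedNbhd_subset Γ v a w (mem_image_of_mem _ hN), mem_univ a, hS⟩

lemma IsDoubleDominating.preimage_mk {D : Set (α × β)}
    (hD : IsDoubleDominating (rootedProduct Γ Ω v) D) (a : α) {x : β} (hx : x ≠ v) :
    2 ≤ (closedNbhd Ω x ∩ Prod.mk a ⁻¹' D).ncard := by
  have h := hD (a, x)
  rwa [closedNbhd_rootedProduct_of_ne Γ v hx, ← image_inter_preimage,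
    ncard_image_of_injective _ (Prod.mk_right_injective a)] at h

theorem gammaX2_rootedProduct_eq [Fintype α] [Finite β] {S : Set β}
    (hS : IsDoubleDominating Ω S)
    (hmin : ∀ T : Set β, (∀ x, x ≠ v → 2 ≤ (closedNbhd Ω x ∩ T).ncard) → S.ncard ≤ T.ncard) :
    gammaX2 (rootedProduct Γ Ω v) = Fintype.card α * S.ncard := by
  have hcard : (univ ×ˢ S : Set (α × β)).ncard = Fintype.card α * S.ncard := by
    rw [ncard_prod, ncard_univ, Nat.card_eq_fintype_card]
  rw [← hcard]
  refine minCard_eq_of_forall_le (hS.univ_prod Γ v) fun D hD => ?_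
  calc (univ ×ˢ S).ncard = ∑ _a : α, S.ncard := by simp [hcard]
    _ ≤ ∑ a, (Prod.mk a ⁻¹' D).ncard :=
      Finset.sum_le_sum fun a _ => hmin _ fun x hx => hD.preimage_mk Γ v a hx
    _ = D.ncard := (ncard_eq_sum_ncard_preimage_mk D).symm

end RootedProduct

section CycleFour

lemma closedNbhd_cycleGraph_four (x : Fin 4) :
    closedNbhd (cycleGraph 4) x = ↑({x, x + 1, x + 3} : Finset (Fin 4)) := by
  ext y
  rw [mem_closedNbhd_iff]
  revert x y
  decide

lemma ncard_closedNbhd_cycleGraph_four (x : Fin 4) : (closedNbhd (cycleGraph 4) x).ncard = 3 := by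
  rw [closedNbhd_cycleGraph_four, ncard_coe_finset]
  revert x
  decide

lemma isDoubleDominating_closedNbhd_cycleGraph_four (v : Fin 4) :
    IsDoubleDominating (cycleGraph 4) (closedNbhd (cycleGraph 4) v) := by
  intro u
  rw [closedNbhd_cycleGraph_four, closedNbhd_cycleGraph_four, ← Finset.coe_inter, ncard_coe_finset]
  revert u v
  decide

lemma three_le_ncard_of_forall_ne_cycleGraph_four (v : Fin 4) (S : Set (Fin 4))
    (h : ∀ x, x ≠ v → 2 ≤ (closedNbhd (cycleGraph 4) x ∩ S).ncard) : 3 ≤ S.ncard := by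
  lift S to Finset (Fin 4) using S.toFinite
  simp only [closedNbhd_cycleGraph_four, ← Finset.coe_inter, ncard_coe_finset] at h ⊢
  revert v S
  decide

lemma gammaX2_cycleGraph_four : gammaX2 (cycleGraph 4) = 3 := by
  rw [← ncard_closedNbhd_cycleGraph_four 0]
  exact minCard_eq_of_forall_le (isDoubleDominating_closedNbhd_cycleGraph_four 0)
    fun D hD => (ncard_closedNbhd_cycleGraph_four 0).trans_le
      (three_le_ncard_of_forall_ne_cycleGraph_four 0 D fun x _ => hD x)

end CycleFour

theorem stmt10_general {α : Type*} [Fintype α] (Γ : SimpleGraph α) (v : Fin 4) :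
    gammaX2 (rootedProduct Γ (SimpleGraph.cycleGraph 4) v)
      = Fintype.card α * gammaX2 (SimpleGraph.cycleGraph 4) ∧
    gammaX2 (rootedProduct Γ (SimpleGraph.cycleGraph 4) v) = 3 * Fintype.card α := by
  have h := gammaX2_rootedProduct_eq Γ v (isDoubleDominating_closedNbhd_cycleGraph_four v)
    fun T hT => (ncard_closedNbhd_cycleGraph_four v).trans_le
      (three_le_ncard_of_forall_ne_cycleGraph_four v T hT)
  rw [ncard_closedNbhd_cycleGraph_four] at h
  exact ⟨by rw [h, gammaX2_cycleGraph_four], by rw [h, mul_comm]⟩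

theorem stmt10 {α : Type*} [Fintype α] (Γ : SimpleGraph α)
    (hconn : Γ.Connected) (hiso : ∀ a : α, ∃ b : α, Γ.Adj a b) (v : Fin 4) :
    gammaX2 (rootedProduct Γ (SimpleGraph.cycleGraph 4) v)
      = Fintype.card α * gammaX2 (SimpleGraph.cycleGraph 4) ∧
    gammaX2 (rootedProduct Γ (SimpleGraph.cycleGraph 4) v) = 3 * Fintype.card α :=
  stmt10_general Γ v
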